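/- Let G be a group generated by a finite set S, acting by isometries on complete metric spaces X_k with no fixed point, with δ_k(x) := max_{s∈S} d_k(x, s·x). Choose *_k ∈ X_k with: every y ∈ X_k with d_k(y,*_k) ≤ k·δ_k(*_k) satisfies δ_k(y) ≥ δ_k(*_k)/2, and set r_k = δ_k(*_k)^{-1}. Then for every sequence (y_k) with (r_k d_k(y_k,*_k)) bounded, and every non-principal ultrafilter ω on ℕ, there exists s ∈ S with lim_ω r_k d_k(y_k, s·y_k) ≥ 1/2. -/

import Mathlib

open Filter

/-! Bounded rescaled distance from `b k` means `d(y_k, b_k) ≤ C δ_k(b_k)`, which is at most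
`k δ_k(b_k)` once `k ≥ C`; a non-principal ultrafilter on `ℕ` lives on such `k`. There the choice
of `b_k` gives `δ_k(y_k) ≥ δ_k(b_k)/2`, that is `r_k d(y_k, s y_k) ≥ 1/2` for a generator `s`
realising the maximum, and since `S` is finite one `s` works for `ω`-almost every `k`. Here
`δ_k(b_k) > 0` because a point fixed by the generators is fixed by `G`. -/

section Displacement

variable {G X : Type*} [Group G] [MetricSpace X] [MulAction G X]

noncomputable def displacement (S : Finset G) (hS : S.Nonempty) (x : X) : ℝ :=
  S.sup' hS fun s => dist x (s • x)

theorem displacement_pos {S : Finset G} (hS : S.Nonempty)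
    (hgen : Subgroup.closure (S : Set G) = ⊤) {x : X} (hx : ¬ ∀ g : G, g • x = x) :
    0 < displacement S hS x := by
  contrapose! hx
  have hfix : (S : Set G) ⊆ MulAction.stabilizer G x := fun s hs =>
    MulAction.mem_stabilizer_iff.mpr <| (dist_le_zero.mp <|
      (Finset.le_sup' (fun s => dist x (s • x)) hs).trans hx).symm
  intro g
  have hg : g ∈ Subgroup.closure (S : Set G) := hgen ▸ Subgroup.mem_top g
  exact MulAction.mem_stabilizer_iff.mp <| (Subgroup.closure_le _).mpr hfix hg

theorem exists_half_le_inv_mul_dist_smul {S : Finset G} (hS : S.Nonempty) {b y : X}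
    {K C : ℝ} (hpos : 0 < displacement S hS b)
    (hb : dist y b ≤ K * displacement S hS b →
      displacement S hS b / 2 ≤ displacement S hS y)
    (hy : (displacement S hS b)⁻¹ * dist y b ≤ C) (hCK : C ≤ K) :
    ∃ s ∈ S, 1 / 2 ≤ (displacement S hS b)⁻¹ * dist y (s • y) := by
  obtain ⟨s, hs, hmax⟩ := Finset.exists_mem_eq_sup' hS fun s => dist y (s • y)
  refine ⟨s, hs, (le_inv_mul_iff₀ hpos).mpr ?_⟩
  have hclose : dist y b ≤ K * displacement S hS b :=
    calc dist y b ≤ displacement S hS b * C := (inv_mul_le_iff₀ hpos).mp hy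
      _ ≤ displacement S hS b * K := mul_le_mul_of_nonneg_left hCK hpos.le
      _ = K * displacement S hS b := mul_comm _ _
  calc displacement S hS b * (1 / 2) = displacement S hS b / 2 := by ring
    _ ≤ displacement S hS y := hb hclose
    _ = dist y (s • y) := hmax

end Displacement

theorem Ultrafilter.eventually_ge_natCast {ω : Ultrafilter ℕ} (hω : ∀ n : ℕ, ω ≠ pure n)
    (C : ℝ) : ∀ᶠ k : ℕ in ω, C ≤ k := by
  have hcof : (ω : Filter ℕ) ≤ atTop := by
    rw [← Nat.cofinite_eq_atTop]
    exact ω.le_cofinite_or_eq_pure.resolve_right fun ⟨n, hn⟩ => hω n hn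
  exact hcof (tendsto_natCast_atTop_atTop.eventually_ge_atTop C)

theorem moved_by_generator_in_ultralimit_general {G : Type*} [Group G]
    (S : Finset G) (hS : S.Nonempty) (hgen : Subgroup.closure (S : Set G) = ⊤)
    (X : ℕ → Type*) [∀ k, MetricSpace (X k)]
    [∀ k, MulAction G (X k)]
    (hnofix : ∀ k : ℕ, ¬ ∃ x : X k, ∀ g : G, g • x = x)
    (δ : ∀ k : ℕ, X k → ℝ)
    (hδ : ∀ (k : ℕ) (x : X k), δ k x = S.sup' hS (fun s => dist x (s • x)))
    (b : ∀ k, X k)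
    (hb : ∀ (k : ℕ) (y : X k), dist y (b k) ≤ (k : ℝ) * δ k (b k) →
      δ k (b k) / 2 ≤ δ k y)
    (r : ℕ → ℝ) (hr : ∀ k, r k = (δ k (b k))⁻¹)
    (ω : Ultrafilter ℕ) (hω : ∀ n : ℕ, ω ≠ pure n)
    (y : ∀ k, X k) (hy : ∃ C : ℝ, ∀ k, r k * dist (y k) (b k) ≤ C)
    (l : G → ℝ)
    (hl : ∀ s ∈ S, Tendsto (fun k => r k * dist (y k) (s • y k)) ω (nhds (l s))) :
    ∃ s ∈ S, (1 : ℝ) / 2 ≤ l s := by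
  obtain rfl : δ = fun k => displacement S hS := funext fun k => funext (hδ k)
  obtain rfl : r = fun k => (displacement S hS (b k))⁻¹ := funext hr
  obtain ⟨C, hC⟩ := hy
  have hmoved : ∀ᶠ k in ω, ∃ s ∈ S,
      1 / 2 ≤ (displacement S hS (b k))⁻¹ * dist (y k) (s • y k) :=
    (Ultrafilter.eventually_ge_natCast hω C).mono fun k hk =>
      exists_half_le_inv_mul_dist_smul hS
        (displacement_pos hS hgen fun hfix => hnofix k ⟨b k, hfix⟩) (hb k (y k)) (hC k) hk
  obtain ⟨s, hs, hs_moved⟩ := (ω.eventually_exists_mem_iff S.finite_toSet).mp hmoved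
  exact ⟨s, hs, ge_of_tendsto (hl s hs) hs_moved⟩

/-- with base points b_k far from almost fixed points (every y with
d(y,b_k) ≤ k·δ_k(b_k) has δ_k(y) ≥ δ_k(b_k)/2) and scaling factors r_k = δ_k(b_k)⁻¹,
every sequence (y_k) at bounded rescaled distance from (b_k) is moved at least 1/2 in
ω-limit by some generator s ∈ S. -/
theorem moved_by_generator_in_ultralimit {G : Type*} [Group G]
    (S : Finset G) (hS : S.Nonempty) (hgen : Subgroup.closure (S : Set G) = ⊤)
    (X : ℕ → Type*) [∀ k, MetricSpace (X k)] [∀ k, Nonempty (X k)]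
    [∀ k, CompleteSpace (X k)] [∀ k, MulAction G (X k)]
    (hiso : ∀ (k : ℕ) (g : G), Isometry (fun x : X k => g • x))
    (hnofix : ∀ k : ℕ, ¬ ∃ x : X k, ∀ g : G, g • x = x)
    (δ : ∀ k : ℕ, X k → ℝ)
    (hδ : ∀ (k : ℕ) (x : X k), δ k x = S.sup' hS (fun s => dist x (s • x)))
    (b : ∀ k, X k)
    (hb : ∀ (k : ℕ) (y : X k), dist y (b k) ≤ (k : ℝ) * δ k (b k) →
      δ k (b k) / 2 ≤ δ k y)
    (r : ℕ → ℝ) (hr : ∀ k, r k = (δ k (b k))⁻¹)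
    (ω : Ultrafilter ℕ) (hω : ∀ n : ℕ, ω ≠ pure n)
    (y : ∀ k, X k) (hy : ∃ C : ℝ, ∀ k, r k * dist (y k) (b k) ≤ C)
    (l : G → ℝ)
    (hl : ∀ s ∈ S, Tendsto (fun k => r k * dist (y k) (s • y k)) ω (nhds (l s))) :
    ∃ s ∈ S, (1 : ℝ) / 2 ≤ l s :=
  moved_by_generator_in_ultralimit_general S hS hgen X hnofix δ hδ b hb r hr ω hω y hy l hl
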